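/- arXiv:2006.04088 — 2 statements merged into one kernel-verified Lean document; each statement's English description precedes it below -/
import Mathlib

section
/- Let F¹ : ℝ^d → ℝ be λ-strongly convex and L-smooth with minimizer θ₁*, and suppose ‖θ₁ - θ₁*‖ ≤ (1/2 - α)√(λ/L)Δ and ‖θⱼ - θ₁*‖ ≥ (1/2 + α)Δ with α ∈ (0, 1/2), Δ > 0. Then F¹(θⱼ) - F¹(θ₁) ≥ α λ Δ². -/
/-!
Strong convexity around the critical point `θs` gives `F θj ≥ F θs + lam/2 ‖θj - θs‖²`, and the
descent lemma for the `L`-Lipschitz gradient gives `F θ₁ ≤ F θs + L/2 ‖θ₁ - θs‖²`. The factor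
`√(lam / L)` in the hypothesis on `θ₁` turns the second bound into `lam/2 ((1/2 - α) Δ)²`, and
`(1/2 + α)² - (1/2 - α)² = 2α`.
-/

open scoped RealInnerProductSpace

section

variable {E : Type*} [NormedAddCommGroup E] [InnerProductSpace ℝ E] [CompleteSpace E]
  {f : E → ℝ} {g : E → E}

theorem HasGradientAt.hasDerivAt_comp_add_smul {x v f' : E} {t : ℝ}
    (hf : HasGradientAt f f' (x + t • v)) :
    HasDerivAt (fun s : ℝ => f (x + s • v)) ⟪f', v⟫ t := by
  have hline : HasDerivAt (fun s : ℝ => x + s • v) v t := by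
    simpa using ((hasDerivAt_id t).smul_const v).const_add x
  have := hf.hasFDerivAt.comp_hasDerivAt t hline
  simp only [InnerProductSpace.toDual_apply_apply] at this
  exact this

theorem le_add_inner_add_of_lipschitz_gradient {L : ℝ} (hf : ∀ x, HasGradientAt f (g x) x)
    (hg : ∀ x y, ‖g x - g y‖ ≤ L * ‖x - y‖) (x y : E) :
    f y ≤ f x + ⟪g x, y - x⟫ + L / 2 * ‖y - x‖ ^ 2 := by
  set v := y - x
  -- `f` along the segment minus the paraboloid; `ψ' ≤ 0` by Cauchy–Schwarz and the Lipschitz bound.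
  set ψ : ℝ → ℝ := fun t => f (x + t • v) - t * ⟪g x, v⟫ - L * ‖v‖ ^ 2 * t ^ 2 / 2
  have hψ (t : ℝ) : HasDerivAt ψ (⟪g (x + t • v) - g x, v⟫ - L * ‖v‖ ^ 2 * t) t := by
    have hsq : HasDerivAt (fun t : ℝ => L * ‖v‖ ^ 2 * t ^ 2 / 2) (L * ‖v‖ ^ 2 * t) t :=
      (((hasDerivAt_pow 2 t).const_mul (L * ‖v‖ ^ 2)).div_const 2).congr_deriv (by ring)
    have hlin : HasDerivAt (fun t : ℝ => t * ⟪g x, v⟫) ⟪g x, v⟫ t := by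
      simpa using (hasDerivAt_id t).mul_const ⟪g x, v⟫
    exact (((hf _).hasDerivAt_comp_add_smul.sub hlin).sub hsq).congr_deriv
      (by rw [inner_sub_left])
  have hψ_anti : AntitoneOn ψ (Set.Icc 0 1) := by
    refine antitoneOn_of_deriv_nonpos (convex_Icc 0 1)
      (fun t _ => (hψ t).continuousAt.continuousWithinAt)
      (fun t _ => (hψ t).differentiableAt.differentiableWithinAt) fun t ht => ?_
    rw [interior_Icc] at ht
    have hgt : ‖g (x + t • v) - g x‖ ≤ L * (t * ‖v‖) := by
      simpa [norm_smul, abs_of_pos ht.1] using hg (x + t • v) x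
    have := (real_inner_le_norm _ v).trans (mul_le_mul_of_nonneg_right hgt (norm_nonneg v))
    rw [(hψ t).deriv]
    nlinarith
  have := hψ_anti (Set.left_mem_Icc.2 zero_le_one) (Set.right_mem_Icc.2 zero_le_one) zero_le_one
  simp [ψ, v] at this
  linarith

end

theorem mul_sq_le_of_le_sqrt_div_mul {lam L r c : ℝ} (hlam : 0 ≤ lam) (hL : 0 < L) (hr : 0 ≤ r)
    (h : r ≤ √(lam / L) * c) : L * r ^ 2 ≤ lam * c ^ 2 := by
  have hsq : r ^ 2 ≤ lam / L * c ^ 2 := by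
    calc r ^ 2 ≤ (√(lam / L) * c) ^ 2 := pow_le_pow_left₀ hr h 2
      _ = lam / L * c ^ 2 := by rw [mul_pow, Real.sq_sqrt (div_nonneg hlam hL.le)]
  calc L * r ^ 2 ≤ L * (lam / L * c ^ 2) := mul_le_mul_of_nonneg_left hsq hL.le
    _ = lam * c ^ 2 := by field_simp

theorem loss_gap_general {d : ℕ} (F : EuclideanSpace ℝ (Fin d) → ℝ)
    (gradF : EuclideanSpace ℝ (Fin d) → EuclideanSpace ℝ (Fin d))
    (lam L : ℝ) (hlam : 0 < lam) (hlamL : lam ≤ L)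
    (hgrad : ∀ θ, HasGradientAt F (gradF θ) θ)
    (hsc : ∀ θ θ', F θ' ≥ F θ + ⟪gradF θ, θ' - θ⟫ + lam / 2 * ‖θ' - θ‖ ^ 2)
    (hsmooth : ∀ θ θ', ‖gradF θ - gradF θ'‖ ≤ L * ‖θ - θ'‖)
    (θs : EuclideanSpace ℝ (Fin d)) (hgradmin : gradF θs = 0)
    (θ₁ θj : EuclideanSpace ℝ (Fin d)) (α Δ : ℝ) (hα : α ∈ Set.Ioo (0 : ℝ) (1/2)) (hΔ : 0 < Δ)
    (hclose : ‖θ₁ - θs‖ ≤ (1/2 - α) * Real.sqrt (lam / L) * Δ)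
    (hfar : ‖θj - θs‖ ≥ (1/2 + α) * Δ) :
    F θj - F θ₁ ≥ α * lam * Δ ^ 2 := by
  have hupper : F θ₁ ≤ F θs + L / 2 * ‖θ₁ - θs‖ ^ 2 := by
    simpa [hgradmin] using le_add_inner_add_of_lipschitz_gradient hgrad hsmooth θs θ₁
  have hlower : F θs + lam / 2 * ‖θj - θs‖ ^ 2 ≤ F θj := by
    simpa [hgradmin] using hsc θs θj
  have hclose_sq : L * ‖θ₁ - θs‖ ^ 2 ≤ lam * ((1/2 - α) * Δ) ^ 2 :=
    mul_sq_le_of_le_sqrt_div_mul hlam.le (hlam.trans_le hlamL) (norm_nonneg _)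
      (hclose.trans_eq (by ring))
  have hfar_sq : lam * ((1/2 + α) * Δ) ^ 2 ≤ lam * ‖θj - θs‖ ^ 2 :=
    mul_le_mul_of_nonneg_left (pow_le_pow_left₀ (by nlinarith [hα.1]) hfar 2) hlam.le
  linarith [show lam * ((1/2 + α) * Δ) ^ 2 - lam * ((1/2 - α) * Δ) ^ 2 = 2 * (α * lam * Δ ^ 2)
    by ring]

/-- Loss gap between an incorrect cluster parameter and the correct one:
`F¹(θⱼ) - F¹(θ₁) ≥ α lam Δ²`. -/
theorem loss_gap {d : ℕ} (F : EuclideanSpace ℝ (Fin d) → ℝ)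
    (gradF : EuclideanSpace ℝ (Fin d) → EuclideanSpace ℝ (Fin d))
    (lam L : ℝ) (hlam : 0 < lam) (hlamL : lam ≤ L)
    (hgrad : ∀ θ, HasGradientAt F (gradF θ) θ)
    (hsc : ∀ θ θ', F θ' ≥ F θ + ⟪gradF θ, θ' - θ⟫ + lam / 2 * ‖θ' - θ‖ ^ 2)
    (hsmooth : ∀ θ θ', ‖gradF θ - gradF θ'‖ ≤ L * ‖θ - θ'‖)
    (θs : EuclideanSpace ℝ (Fin d)) (hmin : ∀ θ, F θs ≤ F θ) (hgradmin : gradF θs = 0)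
    (θ₁ θj : EuclideanSpace ℝ (Fin d)) (α Δ : ℝ) (hα : α ∈ Set.Ioo (0 : ℝ) (1/2)) (hΔ : 0 < Δ)
    (hclose : ‖θ₁ - θs‖ ≤ (1/2 - α) * Real.sqrt (lam / L) * Δ)
    (hfar : ‖θj - θs‖ ≥ (1/2 + α) * Δ) :
    F θj - F θ₁ ≥ α * lam * Δ ^ 2 :=
  loss_gap_general F gradF lam L hlam hlamL hgrad hsc hsmooth θs hgradmin θ₁ θj α Δ hα hΔ hclose
    hfar
end

section
/- Let X ∈ ℝ^{N×d} be a random matrix with i.i.d. N(0,1) entries and ε ∈ ℝ^N a random vector with distribution N(0, σ²I_N), independent of X. Then there exist universal constants c₂, c₃, c₄ such that with probability at least 1 - c₂ exp(-c₃ min{d, N}), ‖Xᵀε‖ ≤ c₄ σ √(dN). -/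
/-!
Split the failure event according to whether `‖ε‖² > 4σ²N`. That part is a `σ²χ²_N` tail. On the
rest, conditionally on `ε = e`, the vector `Xᵀe` is `N(0, ‖e‖² I_d)` and `‖Xᵀε‖² > 16σ²dN` forces a
`‖e‖²χ²_d` tail. Both tails come from one Chernoff bound: `E exp(s Z²) = (1 - 2sv)^(-1/2) ≤ √2` for
`Z ~ N(0, v)` and `sv ≤ 1/4`, whence `P(χ²_n > 4n) ≤ e⁻ⁿ 2^(n/2) ≤ e^(-n/2)`; hence `c₂ = 2`,
`c₃ = 1/2`, `c₄ = 4`. The moment generating function of `‖Xᵀe‖²` is computed without identifying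
the law of `Xᵀe`: linearize `exp (t‖y‖²) = E_g exp (√(2t) ⟨g, y⟩)` with an auxiliary standard
Gaussian vector `g` and integrate out `X` first.
-/

open MeasureTheory ProbabilityTheory Matrix
open scoped ENNReal NNReal

theorem Real.sqrt_two_pow_le_exp (n : ℕ) : √2 ^ n ≤ exp (n / 2) := by
  have hsqrt : √2 ≤ exp (1 / 2) := by
    rw [exp_half]
    exact sqrt_le_sqrt (by linarith [add_one_le_exp (1 : ℝ)])
  calc √2 ^ n ≤ exp (1 / 2) ^ n := pow_le_pow_left₀ (sqrt_nonneg 2) hsqrt n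
    _ = exp (n / 2) := by rw [← exp_nat_mul]; ring_nf

namespace MeasureTheory

open Real

theorem lintegral_exp_sum_pi {ι : Type*} [Fintype ι] {α : ι → Type*}
    [∀ i, MeasurableSpace (α i)] (μ : ∀ i, Measure (α i)) [∀ i, IsProbabilityMeasure (μ i)]
    {f : ∀ i, α i → ℝ} (hf : ∀ i, Measurable (f i)) :
    ∫⁻ x, ENNReal.ofReal (exp (∑ i, f i (x i))) ∂Measure.pi μ
      = ∏ i, ∫⁻ y, ENNReal.ofReal (exp (f i y)) ∂μ i := by
  have hF : ∀ i, Measurable fun y => ENNReal.ofReal (exp (f i y)) := fun i => by fun_prop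
  simp_rw [exp_sum, ENNReal.ofReal_prod_of_nonneg fun i _ => (exp_pos _).le]
  rw [lintegral_prod_eq_prod_lintegral_of_indepFun _ _
    (iIndepFun_pi fun i => (hF i).aemeasurable) fun i => (hF i).comp (measurable_pi_apply i)]
  exact Finset.prod_congr rfl fun i _ => (measurePreserving_eval μ i).lintegral_comp (hF i)

section Chernoff

variable {α : Type*} [MeasurableSpace α]

theorem measure_le_le_exp_neg_mul_lintegral_exp (μ : Measure α) {g : α → ℝ}
    (hg : AEMeasurable g μ) (a : ℝ) :
    μ {x | a ≤ g x} ≤ ENNReal.ofReal (exp (-a)) * ∫⁻ x, ENNReal.ofReal (exp (g x)) ∂μ := by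
  have hlevel : {x | a ≤ g x} = {x | ENNReal.ofReal (exp a) ≤ ENNReal.ofReal (exp (g x))} := by
    ext x
    simp [ENNReal.ofReal_le_ofReal_iff (exp_pos _).le]
  have hmarkov : ENNReal.ofReal (exp a) * μ {x | a ≤ g x}
      ≤ ∫⁻ x, ENNReal.ofReal (exp (g x)) ∂μ := by
    rw [hlevel]
    exact mul_meas_ge_le_lintegral₀
      ((ENNReal.measurable_ofReal.comp measurable_exp).comp_aemeasurable hg) _
  calc μ {x | a ≤ g x}
      = ENNReal.ofReal (exp (-a)) * (ENNReal.ofReal (exp a) * μ {x | a ≤ g x}) := by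
        rw [← mul_assoc, ← ENNReal.ofReal_mul (exp_pos _).le, ← exp_add, neg_add_cancel, exp_zero,
          ENNReal.ofReal_one, one_mul]
    _ ≤ _ := by gcongr

theorem measure_le_le_exp_neg_half_of_lintegral_exp_le {μ : Measure α} {g : α → ℝ}
    (hg : AEMeasurable g μ) (n : ℕ)
    (hmgf : ∫⁻ x, ENNReal.ofReal (exp (g x)) ∂μ ≤ ENNReal.ofReal √2 ^ n) :
    μ {x | n ≤ g x} ≤ ENNReal.ofReal (exp (-n / 2)) := by
  refine (measure_le_le_exp_neg_mul_lintegral_exp μ hg n).trans ?_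
  calc ENNReal.ofReal (exp (-n)) * ∫⁻ x, ENNReal.ofReal (exp (g x)) ∂μ
      ≤ ENNReal.ofReal (exp (-n)) * ENNReal.ofReal √2 ^ n := by gcongr
    _ = ENNReal.ofReal (exp (-n) * √2 ^ n) := by
      rw [ENNReal.ofReal_mul (exp_pos _).le, ENNReal.ofReal_pow (sqrt_nonneg 2)]
    _ ≤ ENNReal.ofReal (exp (-n / 2)) := by
      refine ENNReal.ofReal_le_ofReal ?_
      calc exp (-n) * √2 ^ n ≤ exp (-n) * exp (n / 2) :=
            mul_le_mul_of_nonneg_left (sqrt_two_pow_le_exp n) (exp_pos _).le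
        _ = exp (-n / 2) := by rw [← exp_add]; ring_nf

end Chernoff

theorem Measure.prod_apply_le_add_of_forall_notMem {α β : Type*} [MeasurableSpace α]
    [MeasurableSpace β] {μ : Measure α} {ν : Measure β} [IsProbabilityMeasure μ]
    [IsProbabilityMeasure ν] {S : Set (α × β)} (hS : MeasurableSet S) {A : Set β}
    (hA : MeasurableSet A) {c : ℝ≥0∞}
    (hslice : ∀ y ∉ A, μ ((fun x => (x, y)) ⁻¹' S) ≤ c) :
    μ.prod ν S ≤ ν A + c := by
  have hbound : ∀ y, μ ((fun x => (x, y)) ⁻¹' S) ≤ A.indicator 1 y + c := by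
    intro y
    by_cases hy : y ∈ A
    · simpa [hy] using (prob_le_one (μ := μ)).trans le_self_add
    · simpa [hy] using hslice y hy
  calc μ.prod ν S = ∫⁻ y, μ ((fun x => (x, y)) ⁻¹' S) ∂ν := Measure.prod_apply_symm hS
    _ ≤ ∫⁻ y, (A.indicator 1 y + c) ∂ν := lintegral_mono hbound
    _ = ν A + c := by
      rw [lintegral_add_right _ measurable_const, lintegral_indicator_one hA, lintegral_const,
        measure_univ, mul_one]

end MeasureTheory

namespace ProbabilityTheory

open Real

theorem iIndepFun.measurePreserving_prod_pi_of_sumElim {Ω β : Type*} [MeasurableSpace Ω]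
    [MeasurableSpace β] {P : Measure Ω} {ι ι' : Type*} [Fintype ι] [Fintype ι']
    {Y : ι → Ω → β} {Z : ι' → Ω → β} (hindep : iIndepFun (Sum.elim Y Z) P)
    (hY : ∀ i, Measurable (Y i)) (hZ : ∀ i, Measurable (Z i)) :
    MeasurePreserving (fun ω => (fun i => Y i ω, fun i => Z i ω)) P
      ((Measure.pi fun i => P.map (Y i)).prod (Measure.pi fun i => P.map (Z i))) := by
  have hmeas : ∀ k, Measurable (Sum.elim Y Z k) := Sum.rec hY hZ
  have := hindep.isProbabilityMeasure
  have : ∀ k, IsProbabilityMeasure (P.map (Sum.elim Y Z k)) :=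
    fun k => Measure.isProbabilityMeasure_map (hmeas k).aemeasurable
  exact (measurePreserving_sumPiEquivProdPi _).comp
    ⟨measurable_pi_lambda _ hmeas, hindep.map_fun_eq_pi_map fun k => (hmeas k).aemeasurable⟩

theorem lintegral_exp_mul_gaussianReal (m : ℝ) (v : ℝ≥0) (c : ℝ) :
    ∫⁻ x, ENNReal.ofReal (exp (c * x)) ∂gaussianReal m v
      = ENNReal.ofReal (exp (m * c + v * c ^ 2 / 2)) := by
  rw [← ofReal_integral_eq_lintegral_ofReal (integrable_exp_mul_gaussianReal c)
    (Filter.Eventually.of_forall fun x => (exp_pos _).le)]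
  exact congrArg ENNReal.ofReal (congrFun mgf_fun_id_gaussianReal c)

theorem lintegral_exp_mul_sq_gaussianReal {v : ℝ≥0} (hv : v ≠ 0) {s : ℝ} (hs : 2 * s * v < 1) :
    ∫⁻ x, ENNReal.ofReal (exp (s * x ^ 2)) ∂gaussianReal 0 v
      = ENNReal.ofReal (1 / √(1 - 2 * s * v)) := by
  have hv' : (0 : ℝ) < v := NNReal.coe_pos.mpr (pos_iff_ne_zero.mpr hv)
  obtain ⟨b, hb⟩ : ∃ b : ℝ, b = (1 - 2 * s * v) / (2 * v) := ⟨_, rfl⟩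
  have hb0 : 0 < b := hb ▸ div_pos (by linarith) (by positivity)
  rw [gaussianReal_of_var_ne_zero 0 hv,
    lintegral_withDensity_eq_lintegral_mul _ (measurable_gaussianPDF 0 v) (by fun_prop)]
  have hdensity : ∀ x, gaussianPDF 0 v x * ENNReal.ofReal (exp (s * x ^ 2))
      = ENNReal.ofReal ((√(2 * π * v))⁻¹ * exp (-b * x ^ 2)) := by
    intro x
    rw [gaussianPDF, ← ENNReal.ofReal_mul (gaussianPDFReal_nonneg 0 v x), gaussianPDFReal,
      mul_assoc, ← exp_add]
    congr 3
    rw [hb]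
    field_simp
    ring
  simp only [Pi.mul_apply, hdensity]
  rw [← ofReal_integral_eq_lintegral_ofReal ((integrable_exp_neg_mul_sq hb0).const_mul _)
    (Filter.Eventually.of_forall fun x => by positivity), integral_const_mul, integral_gaussian]
  congr 1
  rw [← sqrt_inv, ← sqrt_mul' _ (by positivity), one_div, ← sqrt_inv]
  congr 1
  rw [hb]
  field_simp

theorem lintegral_exp_mul_sq_gaussianReal_le {v : ℝ≥0} (hv : v ≠ 0) {s : ℝ} (hs : s * v ≤ 1 / 4) :
    ∫⁻ x, ENNReal.ofReal (exp (s * x ^ 2)) ∂gaussianReal 0 v ≤ ENNReal.ofReal √2 := by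
  rw [lintegral_exp_mul_sq_gaussianReal hv (by linarith)]
  refine ENNReal.ofReal_le_ofReal ?_
  rw [one_div, ← sqrt_inv]
  exact sqrt_le_sqrt (by rw [inv_le_comm₀ (by linarith) two_pos]; linarith)

section GaussianVector

variable {ι κ : Type*} [Fintype ι] [Fintype κ]

theorem lintegral_exp_sum_mul_pi_gaussianReal (v : ℝ≥0) (a : ι → ℝ) :
    ∫⁻ x, ENNReal.ofReal (exp (∑ i, a i * x i)) ∂Measure.pi (fun _ : ι => gaussianReal 0 v)
      = ENNReal.ofReal (exp (v * ∑ i, a i ^ 2 / 2)) := by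
  rw [lintegral_exp_sum_pi _ (f := fun i y => a i * y) fun i => by fun_prop]
  simp_rw [lintegral_exp_mul_gaussianReal]
  rw [← ENNReal.ofReal_prod_of_nonneg fun i _ => (exp_pos _).le, ← exp_sum, Finset.mul_sum]
  congr 2
  exact Finset.sum_congr rfl fun i _ => by ring

theorem lintegral_exp_mul_sum_sq_pi_gaussianReal_le {v : ℝ≥0} (hv : v ≠ 0) {s : ℝ}
    (hs : s * v ≤ 1 / 4) :
    ∫⁻ x, ENNReal.ofReal (exp (s * ∑ i, x i ^ 2)) ∂Measure.pi (fun _ : ι => gaussianReal 0 v)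
      ≤ ENNReal.ofReal √2 ^ Fintype.card ι := by
  simp_rw [Finset.mul_sum]
  rw [lintegral_exp_sum_pi _ (f := fun _ y => s * y ^ 2) fun i => by fun_prop,
    ← Finset.card_univ, ← Finset.prod_const]
  exact Finset.prod_le_prod' fun i _ => lintegral_exp_mul_sq_gaussianReal_le hv hs

theorem lintegral_exp_sum_sq_transpose_mulVec_le (e : ι → ℝ) {t : ℝ}
    (ht : 0 ≤ t) (hte : t * ∑ i, e i ^ 2 ≤ 1 / 4) :
    ∫⁻ x, ENNReal.ofReal (exp (t * ∑ j, (∑ i, x (i, j) * e i) ^ 2))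
        ∂Measure.pi (fun _ : ι × κ => gaussianReal 0 1)
      ≤ ENNReal.ofReal √2 ^ Fintype.card κ := by
  obtain ⟨c, hc⟩ : ∃ c : ℝ, c ^ 2 = 2 * t := ⟨√(2 * t), sq_sqrt (by positivity)⟩
  have hlinearize : ∀ x : ι × κ → ℝ, ENNReal.ofReal (exp (t * ∑ j, (∑ i, x (i, j) * e i) ^ 2))
      = ∫⁻ g, ENNReal.ofReal (exp (∑ j, c * (∑ i, x (i, j) * e i) * g j))
          ∂Measure.pi (fun _ : κ => gaussianReal 0 1) := by
    intro x
    rw [lintegral_exp_sum_mul_pi_gaussianReal]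
    congr 2
    rw [NNReal.coe_one, one_mul, Finset.mul_sum]
    refine Finset.sum_congr rfl fun j _ => ?_
    rw [mul_pow, hc]
    ring
  have hintegrate_x : ∀ g : κ → ℝ,
      ∫⁻ x, ENNReal.ofReal (exp (∑ j, c * (∑ i, x (i, j) * e i) * g j))
          ∂Measure.pi (fun _ : ι × κ => gaussianReal 0 1)
        = ENNReal.ofReal (exp ((t * ∑ i, e i ^ 2) * ∑ j, g j ^ 2)) := by
    intro g
    have hbilinear : ∀ x : ι × κ → ℝ, ∑ j, c * (∑ i, x (i, j) * e i) * g j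
        = ∑ p : ι × κ, c * e p.1 * g p.2 * x p := by
      intro x
      rw [Fintype.sum_prod_type, Finset.sum_comm]
      simp_rw [Finset.mul_sum, Finset.sum_mul]
      exact Finset.sum_congr rfl fun j _ => Finset.sum_congr rfl fun i _ => by ring
    simp_rw [hbilinear]
    rw [lintegral_exp_sum_mul_pi_gaussianReal, Fintype.sum_prod_type]
    congr 2
    rw [NNReal.coe_one, one_mul, mul_assoc, Finset.sum_mul_sum, Finset.mul_sum]
    refine Finset.sum_congr rfl fun i _ => ?_
    rw [Finset.mul_sum]
    refine Finset.sum_congr rfl fun j _ => ?_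
    rw [mul_pow, mul_pow, hc]
    ring
  calc _ = ∫⁻ x, ∫⁻ g, ENNReal.ofReal (exp (∑ j, c * (∑ i, x (i, j) * e i) * g j))
          ∂Measure.pi (fun _ : κ => gaussianReal 0 1)
          ∂Measure.pi (fun _ : ι × κ => gaussianReal 0 1) := lintegral_congr hlinearize
    _ = ∫⁻ g, ∫⁻ x, ENNReal.ofReal (exp (∑ j, c * (∑ i, x (i, j) * e i) * g j))
          ∂Measure.pi (fun _ : ι × κ => gaussianReal 0 1)
          ∂Measure.pi (fun _ : κ => gaussianReal 0 1) :=
      lintegral_lintegral_swap (by fun_prop)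
    _ = ∫⁻ g, ENNReal.ofReal (exp ((t * ∑ i, e i ^ 2) * ∑ j, g j ^ 2))
          ∂Measure.pi (fun _ : κ => gaussianReal 0 1) := lintegral_congr hintegrate_x
    _ ≤ _ := lintegral_exp_mul_sum_sq_pi_gaussianReal_le one_ne_zero (by simpa using hte)

theorem measure_pi_gaussianReal_sum_sq_gt_le {v : ℝ≥0} (hv : v ≠ 0) :
    Measure.pi (fun _ : ι => gaussianReal 0 v) {x | 4 * v * Fintype.card ι < ∑ i, x i ^ 2}
      ≤ ENNReal.ofReal (exp (-Fintype.card ι / 2)) := by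
  have hv' : (0 : ℝ) < v := NNReal.coe_pos.mpr (pos_iff_ne_zero.mpr hv)
  have hsub : {x : ι → ℝ | 4 * v * Fintype.card ι < ∑ i, x i ^ 2}
      ⊆ {x | (Fintype.card ι : ℝ) ≤ 1 / (4 * v) * ∑ i, x i ^ 2} := by
    intro x hx
    simp only [Set.mem_ofPred_eq] at hx ⊢
    rw [one_div_mul_eq_div, le_div_iff₀ (by positivity)]
    linarith
  refine (measure_mono hsub).trans (measure_le_le_exp_neg_half_of_lintegral_exp_le
    (Measurable.aemeasurable (by fun_prop)) _
    (lintegral_exp_mul_sum_sq_pi_gaussianReal_le hv (by field_simp; rfl)))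

theorem measure_pi_gaussianReal_sum_sq_transpose_mulVec_gt_le (e : ι → ℝ) :
    Measure.pi (fun _ : ι × κ => gaussianReal 0 1)
        {x | 4 * Fintype.card κ * ∑ i, e i ^ 2 < ∑ j, (∑ i, x (i, j) * e i) ^ 2}
      ≤ ENNReal.ofReal (exp (-Fintype.card κ / 2)) := by
  rcases (Finset.sum_nonneg fun i _ => sq_nonneg (e i)).eq_or_lt with he | he
  · have he0 : e = 0 := funext fun i => pow_eq_zero_iff two_ne_zero |>.mp <|
      congrFun ((Fintype.sum_eq_zero_iff_of_nonneg fun i => sq_nonneg (e i)).mp he.symm) i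
    simp [he0]
  have hsub : {x : ι × κ → ℝ | 4 * Fintype.card κ * ∑ i, e i ^ 2 < ∑ j, (∑ i, x (i, j) * e i) ^ 2}
      ⊆ {x | (Fintype.card κ : ℝ) ≤ 1 / (4 * ∑ i, e i ^ 2) * ∑ j, (∑ i, x (i, j) * e i) ^ 2} := by
    intro x hx
    simp only [Set.mem_ofPred_eq] at hx ⊢
    rw [one_div_mul_eq_div, le_div_iff₀ (by positivity)]
    linarith
  refine (measure_mono hsub).trans (measure_le_le_exp_neg_half_of_lintegral_exp_le
    (Measurable.aemeasurable (by fun_prop)) _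
    (lintegral_exp_sum_sq_transpose_mulVec_le e (by positivity) (by field_simp; norm_num)))

theorem prod_pi_gaussianReal_cross_term_gt_le {v : ℝ≥0} (hv : v ≠ 0) :
    ((Measure.pi fun _ : ι × κ => gaussianReal 0 1).prod
        (Measure.pi fun _ : ι => gaussianReal 0 v))
        {p | 16 * v * Fintype.card κ * Fintype.card ι < ∑ j, (∑ i, p.1 (i, j) * p.2 i) ^ 2}
      ≤ ENNReal.ofReal (exp (-Fintype.card ι / 2))
        + ENNReal.ofReal (exp (-Fintype.card κ / 2)) := by
  refine (Measure.prod_apply_le_add_of_forall_notMem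
    (measurableSet_lt measurable_const (by fun_prop))
    (measurableSet_lt measurable_const (by fun_prop)) fun e he => ?_).trans
    (add_le_add_left (measure_pi_gaussianReal_sum_sq_gt_le hv) _)
  refine (measure_mono fun x hx => ?_).trans
    (measure_pi_gaussianReal_sum_sq_transpose_mulVec_gt_le e)
  simp only [Set.mem_ofPred_eq, Set.mem_preimage, not_lt] at he hx ⊢
  have hκ : (0 : ℝ) ≤ Fintype.card κ := Nat.cast_nonneg _
  nlinarith

end GaussianVector

end ProbabilityTheory

/-- Cross-term bound (Lemma 2 of the paper): for a random `N × d` matrix `X` with i.i.d.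
standard Gaussian entries and an independent Gaussian noise vector `ε ~ N(0, σ²I_N)`,
with probability at least `1 - c₂ exp(-c₃ min{d, N})` we have `‖Xᵀε‖ ≤ c₄ σ √(dN)`. -/
theorem gaussian_cross_term_bound :
    ∃ c₂ c₃ c₄ : ℝ, 0 < c₂ ∧ 0 < c₃ ∧ 0 < c₄ ∧
      ∀ (Ω : Type) (_ : MeasureSpace Ω) (_ : IsProbabilityMeasure (ℙ : Measure Ω))
        (N d : ℕ) (X : Ω → Matrix (Fin N) (Fin d) ℝ) (ε : Ω → Fin N → ℝ) (σ : ℝ),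
        0 < σ →
        (∀ (i : Fin N) (j : Fin d), Measurable (fun ω => X ω i j)) → Measurable ε →
        (∀ (i : Fin N) (j : Fin d), Measure.map (fun ω => X ω i j) ℙ = gaussianReal 0 1) →
        (∀ i : Fin N, Measure.map (fun ω => ε ω i) ℙ = gaussianReal 0 ⟨σ ^ 2, sq_nonneg σ⟩) →
        iIndepFun
          (Sum.elim (fun (p : Fin N × Fin d) ω => X ω p.1 p.2) (fun (i : Fin N) ω => ε ω i))
          ℙ →
        ℙ {ω | Real.sqrt (∑ j : Fin d, ((X ω)ᵀ *ᵥ ε ω) j ^ 2) ≤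
               c₄ * σ * Real.sqrt (d * N)} ≥
          1 - ENNReal.ofReal (c₂ * Real.exp (-c₃ * min d N)) := by
  refine ⟨2, 1 / 2, 4, by norm_num, by norm_num, by norm_num, ?_⟩
  intro Ω _ _ N d X ε σ hσ hmX hmε hX hε hindep
  have hv : (⟨σ ^ 2, sq_nonneg σ⟩ : NNReal) ≠ 0 :=
    fun h => (pow_pos hσ 2).ne' (congrArg NNReal.toReal h)
  have hlaw := hindep.measurePreserving_prod_pi_of_sumElim (fun p => hmX p.1 p.2)
    fun i => hmε.eval
  simp only [hX, hε] at hlaw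
  have hbad : {ω | √(∑ j, ((X ω)ᵀ *ᵥ ε ω) j ^ 2) ≤ 4 * σ * √(d * N)}ᶜ
      = (fun ω => (fun p : Fin N × Fin d => X ω p.1 p.2, fun i => ε ω i)) ⁻¹'
        {p : (Fin N × Fin d → ℝ) × (Fin N → ℝ) |
          16 * σ ^ 2 * Fintype.card (Fin d) * Fintype.card (Fin N)
            < ∑ j, (∑ i, p.1 (i, j) * p.2 i) ^ 2} := by
    ext ω
    simp only [Set.mem_compl_iff, Set.mem_ofPred_eq, Set.mem_preimage, not_le, Fintype.card_fin,
      Real.lt_sqrt (by positivity : (0 : ℝ) ≤ 4 * σ * √(d * N)), mul_pow,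
      Real.sq_sqrt (by positivity : (0 : ℝ) ≤ d * N), mulVec, dotProduct, transpose_apply]
    ring_nf
  have htail : ℙ {ω | √(∑ j, ((X ω)ᵀ *ᵥ ε ω) j ^ 2) ≤ 4 * σ * √(d * N)}ᶜ
      ≤ ENNReal.ofReal (2 * Real.exp (-(1 / 2) * (min d N : ℕ))) := by
    rw [hbad, hlaw.measure_preimage
      (measurableSet_lt measurable_const (by fun_prop)).nullMeasurableSet]
    refine (prod_pi_gaussianReal_cross_term_gt_le hv).trans ?_
    rw [two_mul, ENNReal.ofReal_add (Real.exp_pos _).le (Real.exp_pos _).le, Nat.cast_min,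
      Fintype.card_fin, Fintype.card_fin]
    gcongr <;> linarith [min_le_left (d : ℝ) N, min_le_right (d : ℝ) N]
  rw [ge_iff_le, tsub_le_iff_right, ← measure_univ (μ := (ℙ : Measure Ω))]
  exact (measure_univ_le_add_compl _).trans (add_le_add_right htail _)
end
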